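/- Let M be an irreducible affine algebraic monoid with unit group G and let H ⊆ G be a subgroup, closed in M. Then the following are equivalent: (1) H is observable in M; (2) E_M(H) is a group, i.e. for every ρ ∈ E_M(H) also ρ^{-1} ∈ E_M(H); (3) E_M(H) = X(H), i.e. every rational character of H is extendible to M. -/

import Mathlib

open MvPolynomial

namespace AlgebraicMonoid

variable (k : Type) [Field k] [IsAlgClosed k] (n : ℕ)

/-- `n × n` matrices over `k`: the ambient affine space for linear algebraic monoids. -/
abbrev Mat := Matrix (Fin n) (Fin n) k

/-- Polynomial functions on the space of `n × n` matrices. -/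
abbrev MPoly := MvPolynomial (Fin n × Fin n) k

variable {k n}

/-- Evaluation of a polynomial at a matrix. -/
noncomputable def mEval (x : Mat k n) (p : MPoly k n) : k :=
  eval (fun ij => x ij.1 ij.2) p

/-- The (regular function induced by) `p` vanishes identically on `X`. -/
def VanishesOn (X : Set (Mat k n)) (p : MPoly k n) : Prop :=
  ∀ x ∈ X, mEval x p = 0

/-- Zariski closed subsets of matrix space. -/
def ZClosed (X : Set (Mat k n)) : Prop :=
  ∃ S : Set (MPoly k n), X = {x | ∀ p ∈ S, mEval x p = 0}

/-- An affine (linear) algebraic monoid, realized as a Zariski closed submonoid of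
matrix space (every affine algebraic monoid admits such a closed embedding). -/
structure IsAlgMonoid (M : Set (Mat k n)) : Prop where
  zclosed : ZClosed M
  one_mem : (1 : Mat k n) ∈ M
  mul_mem : ∀ a ∈ M, ∀ b ∈ M, a * b ∈ M

/-- The unit group `G(M)` of the monoid `M`. -/
def unitGroup (M : Set (Mat k n)) : Set (Mat k n) :=
  {g | g ∈ M ∧ ∃ h ∈ M, g * h = 1 ∧ h * g = 1}

/-- `H` is an (abstract) subgroup of `G`. -/
def IsSubgroupOf (H G : Set (Mat k n)) : Prop :=
  H ⊆ G ∧ (1 : Mat k n) ∈ H ∧ (∀ a ∈ H, ∀ b ∈ H, a * b ∈ H) ∧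
    ∀ a ∈ H, ∃ b ∈ H, a * b = 1 ∧ b * a = 1

/-- `Y` is closed in `X` (for the Zariski topology). -/
def IsClosedIn (Y X : Set (Mat k n)) : Prop :=
  Y ⊆ X ∧ ∃ C : Set (Mat k n), ZClosed C ∧ Y = C ∩ X

/-- `X` is irreducible: nonempty, and its vanishing ideal is prime. -/
def IrreducibleSet (X : Set (Mat k n)) : Prop :=
  X.Nonempty ∧ ∀ p q : MPoly k n, VanishesOn X (p * q) → VanishesOn X p ∨ VanishesOn X q

/-- The action of `H` on `M` by left multiplication is observable: every nonzero
`H`-stable ideal of `k[M]` (presented as an ideal of the polynomial ring containing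
the vanishing ideal of `M`) contains a nonzero `H`-invariant function.
Here `H` acts on `k[M]` by `(f · h)(m) = f (h * m)`. -/
def LeftObservable (H M : Set (Mat k n)) : Prop :=
  ∀ J : Ideal (MPoly k n),
    (∀ p : MPoly k n, VanishesOn M p → p ∈ J) →
    (∀ p ∈ J, ∀ h ∈ H, ∃ p' ∈ J, ∀ m ∈ M, mEval m p' = mEval (h * m) p) →
    (∃ p ∈ J, ¬ VanishesOn M p) →
    ∃ p ∈ J, (¬ VanishesOn M p) ∧ ∀ h ∈ H, ∀ m ∈ M, mEval (h * m) p = mEval m p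

/-- `χ` defines a character of (the monoid) `X`, i.e. a regular multiplicative map to `k`. -/
structure IsCharacterOn (X : Set (Mat k n)) (χ : MPoly k n) : Prop where
  map_one : mEval 1 χ = 1
  map_mul : ∀ a ∈ X, ∀ b ∈ X, mEval (a * b) χ = mEval a χ * mEval b χ

/-- The character `χ` of `H` is extendible to `M`: there is a nonzero
`H`-semiinvariant `f ∈ k[M]` of weight `χ`, i.e. `f(h m) = χ(h) f(m)`. -/
def Extendible (M H : Set (Mat k n)) (χ : MPoly k n) : Prop :=
  ∃ f : MPoly k n, (¬ VanishesOn M f) ∧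
    ∀ h ∈ H, ∀ m ∈ M, mEval (h * m) f = mEval h χ * mEval m f

/-- The matrix of regular functions `P` evaluated at `x`: a rational representation. -/
noncomputable def repApply {d : ℕ} (P : Matrix (Fin d) (Fin d) (MPoly k n)) (x : Mat k n) :
    Matrix (Fin d) (Fin d) k :=
  Matrix.of fun i j => mEval x (P i j)

/-- `P` defines a (finite dimensional rational) right `M`-module structure on `k^d`,
the action being `v · x = v ᵥ* (P x)`. -/
def IsRightRep {d : ℕ} (M : Set (Mat k n)) (P : Matrix (Fin d) (Fin d) (MPoly k n)) : Prop :=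
  repApply P 1 = 1 ∧ ∀ a ∈ M, ∀ b ∈ M, repApply P (a * b) = repApply P a * repApply P b

end AlgebraicMonoid

/-!
The left translates `x ↦ p (h * x)`, `h ∈ H`, of a polynomial `p` span a finite-dimensional
`H`-stable space of functions on `M` (translation does not raise the degree).  The determinant
of the action of `H` on such a space with basis `q` is a character of `H` extendible to `M`:
for points `z j` at which the `q i` are independent, `x ↦ det (q i (x * z j))` is a nonzero
semi-invariant of that weight.

(1) ⇒ (2): if `f` is a semi-invariant of weight `ρ`, observability applied to the `H`-stable
ideal `I(M) + (f)` gives an invariant `i + g * f` with `i ∈ I(M)`, and irreducibility of `M`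
makes `g` a semi-invariant of weight `ρ⁻¹`; by the Nullstellensatz `ρ⁻¹` is a polynomial on the
closed set `H`.
(2) ⇒ (1): for a nonzero `H`-stable ideal `J ∋ p₀`, the translates of `p₀` have a basis in
`J`; a variant of the determinant semi-invariant lies in `J`, and multiplying it by an extension
of the inverse determinant character gives a nonzero invariant in `J`.
(1) ⇒ (3): the translates of a character `χ` span `k χ ⊕ W`, where `W` consists of the
functions vanishing on `H`; `H` acts on it by a block triangular matrix, so `χ` is the quotient
of two extendible determinant characters.
(3) ⇒ (2): the Nullstellensatz again.
-/

namespace AlgebraicMonoid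

variable {k : Type} [Field k] {n : ℕ}

section Evaluation

@[simp] lemma mEval_add (x : Mat k n) (p q : MPoly k n) :
    mEval x (p + q) = mEval x p + mEval x q := map_add _ _ _

@[simp] lemma mEval_sub (x : Mat k n) (p q : MPoly k n) :
    mEval x (p - q) = mEval x p - mEval x q := map_sub _ _ _

@[simp] lemma mEval_mul (x : Mat k n) (p q : MPoly k n) :
    mEval x (p * q) = mEval x p * mEval x q := map_mul _ _ _

@[simp] lemma mEval_smul (x : Mat k n) (c : k) (p : MPoly k n) :
    mEval x (c • p) = c * mEval x p := by
  simp [mEval, smul_eval]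

@[simp] lemma mEval_one (x : Mat k n) : mEval x (1 : MPoly k n) = 1 := map_one _

@[simp] lemma mEval_C (x : Mat k n) (c : k) : mEval x (C c : MPoly k n) = c := eval_C c

lemma mEval_det {d : ℕ} (x : Mat k n) (P : Matrix (Fin d) (Fin d) (MPoly k n)) :
    mEval x P.det = (repApply P x).det := by
  rw [mEval, RingHom.map_det]
  rfl

noncomputable def leftTranslate (h : Mat k n) (p : MPoly k n) : MPoly k n :=
  bind₁ (fun ij => ∑ l, C (h ij.1 l) * X (l, ij.2)) p

noncomputable def rightTranslate (z : Mat k n) (p : MPoly k n) : MPoly k n :=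
  bind₁ (fun ij => ∑ l, C (z l ij.2) * X (ij.1, l)) p

lemma eval_bind₁ {σ τ : Type*} (f : τ → k) (g : σ → MvPolynomial τ k) (p : MvPolynomial σ k) :
    eval f (bind₁ g p) = eval (fun i => eval f (g i)) p := by
  simpa using eval₂Hom_bind₁ (RingHom.id k) f g p

@[simp] lemma mEval_leftTranslate (h x : Mat k n) (p : MPoly k n) :
    mEval x (leftTranslate h p) = mEval (h * x) p := by
  simp [mEval, leftTranslate, eval_bind₁, Matrix.mul_apply]

@[simp] lemma mEval_rightTranslate (z x : Mat k n) (p : MPoly k n) :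
    mEval x (rightTranslate z p) = mEval (x * z) p := by
  simp [mEval, rightTranslate, eval_bind₁, Matrix.mul_apply, mul_comm]

lemma totalDegree_leftTranslate_le (h : Mat k n) (p : MPoly k n) :
    (leftTranslate h p).totalDegree ≤ p.totalDegree := by
  have hlin : ∀ ij : Fin n × Fin n,
      (∑ l, C (h ij.1 l) * X (l, ij.2) : MPoly k n).IsHomogeneous 1 := fun ij =>
    IsHomogeneous.sum _ _ _ fun l _ => by
      simpa using (isHomogeneous_X k (l, ij.2)).C_mul (h ij.1 l)
  conv_lhs => rw [leftTranslate, ← sum_homogeneousComponent p, map_sum]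
  refine (totalDegree_finsetSum _ _).trans (Finset.sup_le fun i hi => ?_)
  refine (((homogeneousComponent_isHomogeneous i p).aeval _ hlin).totalDegree_le).trans ?_
  simpa [Nat.lt_succ_iff] using hi

noncomputable def detPoly : MPoly k n := (Matrix.of fun i j => X (i, j)).det

@[simp] lemma mEval_detPoly (x : Mat k n) : mEval x (detPoly : MPoly k n) = x.det := by
  rw [detPoly, mEval_det]
  congr 1
  ext i j
  simp [repApply, mEval]

end Evaluation

section Zariski

def vanishingIdealOn (X : Set (Mat k n)) : Ideal (MPoly k n) where
  carrier := {p | VanishesOn X p}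
  add_mem' hp hq x hx := by simp [hp x hx, hq x hx]
  zero_mem' x _ := map_zero _
  smul_mem' c p hp x hx := by simp [hp x hx]

lemma ZClosed.mem_of_forall_vanishesOn {X : Set (Mat k n)} (hX : ZClosed X) {x : Mat k n}
    (hx : ∀ p, VanishesOn X p → mEval x p = 0) : x ∈ X := by
  obtain ⟨S, rfl⟩ := hX
  exact fun p hp => hx p fun y hy => hy p hp

lemma ZClosed.inter {X Y : Set (Mat k n)} (hX : ZClosed X) (hY : ZClosed Y) :
    ZClosed (X ∩ Y) := by
  obtain ⟨S, rfl⟩ := hX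
  obtain ⟨T, rfl⟩ := hY
  refine ⟨S ∪ T, ?_⟩
  ext x
  simp [or_imp, forall_and]

lemma IsClosedIn.zclosed {X Y : Set (Mat k n)} (hY : IsClosedIn Y X) (hX : ZClosed X) :
    ZClosed Y := by
  obtain ⟨C, hC, rfl⟩ := hY.2
  exact hC.inter hX

lemma ZClosed.preimage_mul_left {X : Set (Mat k n)} (hX : ZClosed X) (a : Mat k n) :
    ZClosed {x | a * x ∈ X} := by
  obtain ⟨S, rfl⟩ := hX
  exact ⟨leftTranslate a '' S, by ext x; simp⟩

/-- Noetherianity of the polynomial ring, read through vanishing ideals. -/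
lemma ZClosed.exists_subset_succ {C : ℕ → Set (Mat k n)} (hC : ∀ j, ZClosed (C j))
    (hanti : Antitone C) : ∃ N, C N ⊆ C (N + 1) := by
  obtain ⟨N, hN⟩ := monotone_stabilizes_iff_noetherian.mpr inferInstance
    ⟨fun j => vanishingIdealOn (C j), fun i j hij p hp x hx => hp x (hanti hij hx)⟩
  refine ⟨N, fun x hx => (hC (N + 1)).mem_of_forall_vanishesOn fun p hp => ?_⟩
  have hpN : VanishesOn (C N) p := (SetLike.ext_iff.mp (hN (N + 1) N.le_succ) p).mpr hp
  exact hpN x hx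

/-- Weak Nullstellensatz: `1 ∈ I(X) + (ρ)` when `ρ` has no zero on `X`. -/
lemma ZClosed.exists_mul_eq_one [IsAlgClosed k] {X : Set (Mat k n)} (hX : ZClosed X)
    (ρ : MPoly k n) (hρ : ∀ x ∈ X, mEval x ρ ≠ 0) :
    ∃ ρ', ∀ x ∈ X, mEval x ρ * mEval x ρ' = 1 := by
  let φ : Mat k n → (Fin n × Fin n → k) := fun x ij => x ij.1 ij.2
  let I : Ideal (MPoly k n) := vanishingIdeal k (φ '' X) ⊔ Ideal.span {ρ}
  have hzero : zeroLocus k I = ∅ := by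
    refine Set.eq_empty_of_forall_notMem fun y hy => ?_
    have hyX : Matrix.of (fun i j => y (i, j)) ∈ X := hX.mem_of_forall_vanishesOn fun p hp =>
      hy p (Ideal.mem_sup_left (by rintro _ ⟨w, hw, rfl⟩; exact hp w hw))
    exact hρ _ hyX (hy ρ (Ideal.mem_sup_right (Ideal.subset_span rfl)))
  have hI : I = ⊤ := by
    rw [← Ideal.radical_eq_top, ← vanishingIdeal_zeroLocus_eq_radical (K := k), hzero,
      vanishingIdeal_empty]
  obtain ⟨a, ha, b, hb, hab⟩ := Submodule.mem_sup.mp (hI ▸ Submodule.mem_top : (1 : MPoly k n) ∈ I)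
  obtain ⟨ρ', rfl⟩ := Ideal.mem_span_singleton'.mp hb
  refine ⟨ρ', fun x hx => ?_⟩
  have hax : mEval x a = 0 := ha (φ x) ⟨x, hx, rfl⟩
  have := congrArg (mEval x) hab
  simp only [mEval_add, mEval_mul, hax, zero_add] at this
  simpa [mul_comm] using this

end Zariski

section Monoid

variable {M : Set (Mat k n)}

lemma IrreducibleSet.not_vanishesOn_mul (hM : IrreducibleSet M) {p q : MPoly k n}
    (hp : ¬ VanishesOn M p) (hq : ¬ VanishesOn M q) : ¬ VanishesOn M (p * q) :=
  fun h => (hM.2 p q h).elim hp hq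

lemma IsAlgMonoid.mapsTo_mul_left (hM : IsAlgMonoid M) {h : Mat k n} (hh : h ∈ M) :
    Set.MapsTo (h * ·) M M :=
  fun _ hm => hM.mul_mem h hh _ hm

/-- The closed sets `u ^ j • M` decrease, so they stabilize; `u ^ N ∈ u ^ (N + 1) • M` then
says `u⁻¹ ∈ M`. -/
lemma IsAlgMonoid.inv_mem (hM : IsAlgMonoid M) {u : (Mat k n)ˣ} (hu : (u : Mat k n) ∈ M) :
    ((u⁻¹ : (Mat k n)ˣ) : Mat k n) ∈ M := by
  let C : ℕ → Set (Mat k n) := fun j => {x | ((u⁻¹ ^ j : (Mat k n)ˣ) : Mat k n) * x ∈ M}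
  have hanti : Antitone C := antitone_nat_of_succ_le fun j x hx => by
    have hj : ((u⁻¹ ^ j : (Mat k n)ˣ) : Mat k n) * x
        = u * (((u⁻¹ ^ (j + 1) : (Mat k n)ˣ) : Mat k n) * x) := by
      rw [← mul_assoc, ← Units.val_mul, pow_succ', mul_inv_cancel_left]
    show _ ∈ M
    exact hj ▸ hM.mul_mem _ hu _ hx
  obtain ⟨N, hN⟩ := ZClosed.exists_subset_succ (fun j => hM.zclosed.preimage_mul_left _) hanti
  have hmem : ((u ^ N : (Mat k n)ˣ) : Mat k n) ∈ C N := by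
    simpa [C, ← Units.val_mul] using hM.one_mem
  simpa [C, ← Units.val_mul, pow_succ', mul_assoc] using hN hmem

lemma IsAlgMonoid.exists_unit_eval_ne_zero (hM : IsAlgMonoid M) (hMirr : IrreducibleSet M)
    {p : MPoly k n} (hp : ¬ VanishesOn M p) :
    ∃ u : (Mat k n)ˣ, (u : Mat k n) ∈ M ∧ ((u⁻¹ : (Mat k n)ˣ) : Mat k n) ∈ M ∧
      mEval u p ≠ 0 := by
  have hdet : ¬ VanishesOn M detPoly := fun h => by simpa using h 1 hM.one_mem
  obtain ⟨g, hg, hpg⟩ : ∃ g ∈ M, mEval g (p * detPoly) ≠ 0 := by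
    simpa [VanishesOn] using hMirr.not_vanishesOn_mul hp hdet
  rw [mEval_mul, mEval_detPoly, mul_ne_zero_iff] at hpg
  obtain ⟨u, rfl⟩ := (Matrix.isUnit_iff_isUnit_det g).mpr (isUnit_iff_ne_zero.mpr hpg.2)
  exact ⟨u, hg, hM.inv_mem hg, hpg.1⟩

end Monoid

section Functions

variable {M H : Set (Mat k n)}

variable (M) in
/-- Restriction of polynomials to `M`: the quotient map onto `k[M]`, viewed inside `M → k`. -/
noncomputable def evalOn : MPoly k n →ₗ[k] (M → k) where
  toFun p m := mEval m p
  map_add' p q := by ext; simp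
  map_smul' c p := by ext; simp

@[simp] lemma evalOn_apply (p : MPoly k n) (m : M) : evalOn M p m = mEval m p := rfl

lemma exists_isUnit_det_of_linearIndependent {X : Type*} :
    ∀ {d : ℕ} (g : Fin d → X → k), LinearIndependent k g →
      ∃ x : Fin d → X, IsUnit (Matrix.of fun i j => g i (x j)).det
  | 0, _, _ => ⟨Fin.elim0, by simp⟩
  | e + 1, g, hg => by
    obtain ⟨y, hy⟩ := exists_isUnit_det_of_linearIndependent (fun i => g i.succ)
      (hg.comp Fin.succ (Fin.succ_injective e))
    by_contra! hcon
    -- cofactors along the first column: the determinant at the points `(x₀, y)` vanishes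
    -- for every `x₀`, a linear relation among the `g i` with coefficient `det y ≠ 0` at `0`
    let minor : Fin (e + 1) → k := fun i =>
      (-1) ^ (i : ℕ) * (Matrix.of fun i' j' => g (i.succAbove i') (y j')).det
    have hrel : ∑ i, minor i • g i = 0 := by
      ext x₀
      have h0 := hcon (Fin.cons x₀ y)
      rw [isUnit_iff_ne_zero, not_not, Matrix.det_succ_column_zero] at h0
      simp only [Finset.sum_apply, Pi.smul_apply, smul_eq_mul, Pi.zero_apply, minor]
      rw [← h0]
      refine Finset.sum_congr rfl fun i _ => ?_
      simp only [Matrix.of_apply, Fin.cons_zero]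
      rw [mul_right_comm]
      congr 2
    have := Fintype.linearIndependent_iff.mp hg minor hrel 0
    simp only [minor, Fin.val_zero, pow_zero, one_mul, Fin.succAbove_zero] at this
    exact hy.ne_zero this

lemma evalOn_leftTranslate {h : Mat k n} (hh : Set.MapsTo (h * ·) M M) (p : MPoly k n) :
    evalOn M (leftTranslate h p) = LinearMap.funLeft k k hh.restrict (evalOn M p) := by
  ext; simp

def IsLeftStable (M H : Set (Mat k n)) (V : Submodule k (M → k)) : Prop :=
  ∀ h ∈ H, ∀ p, evalOn M p ∈ V → evalOn M (leftTranslate h p) ∈ V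

noncomputable def translateSpan (M H : Set (Mat k n)) (p : MPoly k n) : Submodule k (M → k) :=
  Submodule.span k ((fun h => evalOn M (leftTranslate h p)) '' H)

variable (M) in
lemma evalOn_mem_translateSpan (h1 : (1 : Mat k n) ∈ H) (p : MPoly k n) :
    evalOn M p ∈ translateSpan M H p :=
  Submodule.subset_span ⟨1, h1, by ext; simp⟩

instance finiteDimensional_translateSpan (p : MPoly k n) :
    FiniteDimensional k (translateSpan M H p) := by
  refine Submodule.finiteDimensional_of_le
    (S₂ := (restrictTotalDegree _ k p.totalDegree).map (evalOn M)) (Submodule.span_le.mpr ?_)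
  rintro _ ⟨h, -, rfl⟩
  exact ⟨_, (mem_restrictTotalDegree _ _ _).mpr (totalDegree_leftTranslate_le h p), rfl⟩

lemma IsSubgroupOf.subset_of_unitGroup (hH : IsSubgroupOf H (unitGroup M)) : H ⊆ M :=
  fun _ hh => (hH.1 hh).1

lemma isLeftStable_translateSpan (hM : IsAlgMonoid M) (hH : IsSubgroupOf H (unitGroup M))
    (p : MPoly k n) : IsLeftStable M H (translateSpan M H p) := by
  intro h hh q hq
  have hmaps := hM.mapsTo_mul_left (hH.subset_of_unitGroup hh)
  have hmap : (translateSpan M H p).map (LinearMap.funLeft k k hmaps.restrict)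
      ≤ translateSpan M H p := by
    rw [translateSpan, Submodule.map_span, Submodule.span_le]
    rintro _ ⟨_, ⟨h', hh', rfl⟩, rfl⟩
    refine Submodule.subset_span ⟨h' * h, hH.2.2.1 h' hh' h hh, ?_⟩
    ext
    simp [mul_assoc]
  rw [evalOn_leftTranslate hmaps]
  exact hmap (Submodule.mem_map_of_mem hq)

lemma IsLeftStable.inf_ker_restrict {V : Submodule k (M → k)} (hV : IsLeftStable M H V)
    (hHM : H ⊆ M) (hmul : ∀ a ∈ H, ∀ b ∈ H, a * b ∈ H) :
    IsLeftStable M H (V ⊓ LinearMap.ker (LinearMap.funLeft k k (Set.inclusion hHM))) := by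
  rintro h hh p ⟨hpV, hpH⟩
  refine ⟨hV h hh p hpV, ?_⟩
  ext x
  simpa using congrFun hpH ⟨h * x, hmul h hh x x.2⟩

lemma exists_linearIndependent_evalOn (V : Submodule k (M → k)) [FiniteDimensional k V]
    (S : Submodule k (MPoly k n)) (hV : V ≤ S.map (evalOn M)) :
    ∃ (d : ℕ) (q : Fin d → MPoly k n), (∀ i, q i ∈ S) ∧
      LinearIndependent k (evalOn M ∘ q) ∧ Submodule.span k (Set.range (evalOn M ∘ q)) = V := by
  let b := Module.finBasis k V
  choose q hqS hq using fun i => hV (b i).2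
  have hcomp : evalOn M ∘ q = V.subtype ∘ b := funext hq
  refine ⟨_, q, hqS, ?_, ?_⟩
  · rw [hcomp]
    exact b.linearIndependent.map' V.subtype V.ker_subtype
  · rw [hcomp, Set.range_comp, Submodule.span_image, b.span_eq, Submodule.map_subtype_top]

end Functions

section Characters

variable {M H : Set (Mat k n)}

def IsSemiinvariant (M H : Set (Mat k n)) (c : Mat k n → k) (f : MPoly k n) : Prop :=
  ∀ h ∈ H, ∀ m ∈ M, mEval (h * m) f = c h * mEval m f

lemma Extendible.mul (hM : IrreducibleSet M) {χ₁ χ₂ : MPoly k n} (h₁ : Extendible M H χ₁)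
    (h₂ : Extendible M H χ₂) : Extendible M H (χ₁ * χ₂) := by
  obtain ⟨f₁, hf₁, hs₁⟩ := h₁
  obtain ⟨f₂, hf₂, hs₂⟩ := h₂
  refine ⟨f₁ * f₂, hM.not_vanishesOn_mul hf₁ hf₂, fun h hh m hm => ?_⟩
  simp only [mEval_mul, hs₁ h hh m hm, hs₂ h hh m hm]
  ring

lemma Extendible.congr {χ χ' : MPoly k n} (hχ : Extendible M H χ)
    (hχχ' : ∀ h ∈ H, mEval h χ = mEval h χ') : Extendible M H χ' := by
  obtain ⟨f, hf, hs⟩ := hχ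
  exact ⟨f, hf, fun h hh m hm => hχχ' h hh ▸ hs h hh m hm⟩

lemma exists_character_of_isSemiinvariant (hHM : H ⊆ M) (h1 : (1 : Mat k n) ∈ M)
    {c : Mat k n → k} {u : MPoly k n} (hu : IsSemiinvariant M H c u) (hu1 : mEval 1 u ≠ 0) :
    ∃ χ, IsCharacterOn H χ ∧ Extendible M H χ ∧ ∀ h ∈ H, mEval h χ = c h := by
  have hc : ∀ h ∈ H, mEval h ((mEval 1 u)⁻¹ • u) = c h := fun h hh => by
    have := hu h hh 1 h1
    rw [mul_one] at this
    rw [mEval_smul, this, mul_comm, mul_assoc, mul_inv_cancel₀ hu1, mul_one]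
  refine ⟨(mEval 1 u)⁻¹ • u, ⟨by simp [hu1], fun a ha b hb => ?_⟩,
    ⟨u, fun hv => hu1 (hv 1 h1), fun h hh m hm => hc h hh ▸ hu h hh m hm⟩, hc⟩
  rw [hc a ha, mEval_smul, mEval_smul, hu a ha b (hHM hb)]
  ring

def IsTranslationMatrix (M H : Set (Mat k n)) {d : ℕ} (q : Fin d → MPoly k n)
    (A : Mat k n → Matrix (Fin d) (Fin d) k) : Prop :=
  ∀ h ∈ H, ∀ m ∈ M, (fun i => mEval (h * m) (q i)) = (A h).mulVec fun i => mEval m (q i)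

lemma IsLeftStable.exists_isTranslationMatrix {V : Submodule k (M → k)}
    (hV : IsLeftStable M H V) {d : ℕ} {q : Fin d → MPoly k n}
    (hq : Submodule.span k (Set.range (evalOn M ∘ q)) = V) :
    ∃ A, IsTranslationMatrix M H q A := by
  have hrow : ∀ h ∈ H, ∀ i, ∃ c : Fin d → k,
      ∑ j, c j • evalOn M (q j) = evalOn M (leftTranslate h (q i)) := fun h hh i =>
    (Submodule.mem_span_range_iff_exists_fun k).mp
      (hq ▸ hV h hh _ (hq ▸ Submodule.subset_span (Set.mem_range_self i)))
  choose! A hA using hrow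
  refine ⟨fun h => Matrix.of (A h), fun h hh m hm => ?_⟩
  ext i
  simpa [Matrix.mulVec, dotProduct] using (congrFun (hA h hh i) ⟨m, hm⟩).symm

lemma det_vecCons_vecCons_zero {R : Type*} [CommRing R] {e : ℕ} (a : R) (t : Fin e → R)
    (A : Matrix (Fin e) (Fin e) R) :
    (Matrix.of (Matrix.vecCons (Matrix.vecCons a t) fun i => Matrix.vecCons 0 (A i))).det
      = a * A.det := by
  rw [Matrix.det_succ_column_zero, Fin.sum_univ_succ]
  simp [Matrix.submatrix]
  rfl

lemma IsTranslationMatrix.cons {d : ℕ} {q : Fin d → MPoly k n}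
    {A : Mat k n → Matrix (Fin d) (Fin d) k} (hA : IsTranslationMatrix M H q A)
    {p : MPoly k n} {a : Mat k n → k}
    (hp : ∀ h ∈ H, evalOn M (leftTranslate h p) - a h • evalOn M p ∈
      Submodule.span k (Set.range (evalOn M ∘ q))) :
    ∃ B, IsTranslationMatrix M H (Matrix.vecCons p q) B ∧ ∀ h ∈ H, (B h).det = a h * (A h).det := by
  choose! t ht using fun h hh => (Submodule.mem_span_range_iff_exists_fun k).mp (hp h hh)
  refine ⟨fun h => .of (Matrix.vecCons (Matrix.vecCons (a h) (t h))
    fun i => Matrix.vecCons 0 (A h i)), fun h hh m hm => ?_,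
    fun h _ => det_vecCons_vecCons_zero _ _ _⟩
  ext i
  refine Fin.cases ?_ (fun i => ?_) i
  · have := congrFun (ht h hh) ⟨m, hm⟩
    simp only [Finset.sum_apply, Pi.smul_apply, Pi.sub_apply, evalOn_apply,
      Function.comp_apply, smul_eq_mul, mEval_leftTranslate] at this
    simp [Matrix.mulVec, dotProduct, Fin.sum_univ_succ, this]
  · simpa [Matrix.mulVec, dotProduct, Fin.sum_univ_succ] using congrFun (hA h hh m hm) i

lemma IsTranslationMatrix.isSemiinvariant_det (hM : IsAlgMonoid M) {d : ℕ}
    {q : Fin d → MPoly k n} {A : Mat k n → Matrix (Fin d) (Fin d) k}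
    (hA : IsTranslationMatrix M H q A) (P : Matrix (Fin d) (Fin d) (MPoly k n))
    (z : Fin d → Mat k n) (hz : ∀ j, z j ∈ M)
    (hP : ∀ x i j, mEval x (P i j) = mEval (x * z j) (q i)) :
    IsSemiinvariant M H (fun h => (A h).det) P.det := by
  intro h hh m hm
  have hcol : repApply P (h * m) = A h * repApply P m := by
    ext i j
    simpa [repApply, hP, mul_assoc, Matrix.mul_apply, Matrix.mulVec, dotProduct]
      using congrFun (hA h hh _ (hM.mul_mem _ hm _ (hz j))) i
  rw [mEval_det, mEval_det, hcol, Matrix.det_mul]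

lemma IsTranslationMatrix.exists_character (hM : IsAlgMonoid M) (hHM : H ⊆ M) {d : ℕ}
    {q : Fin d → MPoly k n} (hq : LinearIndependent k (evalOn M ∘ q))
    {A : Mat k n → Matrix (Fin d) (Fin d) k} (hA : IsTranslationMatrix M H q A) :
    ∃ χ, IsCharacterOn H χ ∧ Extendible M H χ ∧ ∀ h ∈ H, mEval h χ = (A h).det := by
  obtain ⟨z, hz⟩ := exists_isUnit_det_of_linearIndependent _ hq
  refine exists_character_of_isSemiinvariant hHM hM.one_mem
    (hA.isSemiinvariant_det hM (.of fun i j => rightTranslate (z j) (q i)) (fun j => z j)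
      (fun j => (z j).2) fun x i j => by simp) ?_
  rw [mEval_det]
  simpa [repApply] using hz.ne_zero

end Characters

section Observability

variable {M H : Set (Mat k n)}

lemma IsSubgroupOf.exists_inverse_character [IsAlgClosed k] {G : Set (Mat k n)}
    (hH : IsSubgroupOf H G) (hHz : ZClosed H) {ρ : MPoly k n} (hρ : IsCharacterOn H ρ) :
    ∃ ρ', IsCharacterOn H ρ' ∧ ∀ h ∈ H, mEval h ρ * mEval h ρ' = 1 := by
  have hne : ∀ h ∈ H, mEval h ρ ≠ 0 := fun h hh h0 => by
    obtain ⟨b, hb, hhb, -⟩ := hH.2.2.2 h hh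
    have := hρ.map_mul h hh b hb
    rw [hhb, hρ.map_one, h0, zero_mul] at this
    exact one_ne_zero this
  obtain ⟨ρ', hρ'⟩ := hHz.exists_mul_eq_one ρ hne
  refine ⟨ρ', ⟨?_, fun a ha b hb => ?_⟩, hρ'⟩
  · simpa [hρ.map_one] using hρ' 1 hH.2.1
  · have hab := hH.2.2.1 a ha b hb
    refine mul_left_cancel₀ (hne _ hab) ?_
    rw [hρ' _ hab, hρ.map_mul a ha b hb]
    linear_combination (-(mEval b ρ * mEval b ρ')) * hρ' a ha - hρ' b hb

lemma LeftObservable.exists_isSemiinvariant_inv (hobs : LeftObservable H M)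
    (hM : IsAlgMonoid M) (hMirr : IrreducibleSet M) (hHM : H ⊆ M) {c c' : Mat k n → k}
    (hcc' : ∀ h ∈ H, c h * c' h = 1) {f : MPoly k n} (hf : ¬ VanishesOn M f)
    (hs : IsSemiinvariant M H c f) :
    ∃ g, ¬ VanishesOn M g ∧ IsSemiinvariant M H c' g := by
  let J := vanishingIdealOn M ⊔ Ideal.span {f}
  have hmemJ : ∀ p ∈ J, ∃ i ∈ vanishingIdealOn M, ∃ g, p = i + g * f := fun p hp => by
    obtain ⟨i, hi, _, hb, rfl⟩ := Submodule.mem_sup.mp hp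
    obtain ⟨g, rfl⟩ := Ideal.mem_span_singleton'.mp hb
    exact ⟨i, hi, g, rfl⟩
  have hstable : ∀ p ∈ J, ∀ h ∈ H, ∃ p' ∈ J, ∀ m ∈ M, mEval m p' = mEval (h * m) p := by
    intro p hp h hh
    obtain ⟨i, hi, g, rfl⟩ := hmemJ p hp
    have hgf : leftTranslate h g * f ∈ J :=
      Ideal.mem_sup_right (Ideal.mul_mem_left _ _ (Ideal.mem_span_singleton_self f))
    refine ⟨C (c h) * (leftTranslate h g * f), J.mul_mem_left _ hgf, fun m hm => ?_⟩
    simp only [mEval_mul, mEval_C, mEval_leftTranslate, mEval_add,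
      hi _ (hM.mul_mem h (hHM hh) m hm), hs h hh m hm]
    ring
  obtain ⟨p, hpJ, hp, hpinv⟩ := hobs J (fun p hp => Ideal.mem_sup_left hp) hstable
    ⟨f, Ideal.mem_sup_right (Ideal.mem_span_singleton_self f), hf⟩
  obtain ⟨i, hi, g, rfl⟩ := hmemJ p hpJ
  refine ⟨g, fun hg => hp fun m hm => by simp [hi m hm, hg m hm], fun h hh m hm => ?_⟩
  have hcg : VanishesOn M (c h • leftTranslate h g - g) := by
    refine (hMirr.2 _ f fun m hm => ?_).resolve_right hf
    have := hpinv h hh m hm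
    simp only [mEval_add, mEval_mul, hi m hm, hi _ (hM.mul_mem h (hHM hh) m hm),
      hs h hh m hm, zero_add] at this
    simp only [mEval_mul, mEval_sub, mEval_smul, mEval_leftTranslate]
    linear_combination this
  have := hcg m hm
  simp only [mEval_sub, mEval_smul, mEval_leftTranslate] at this
  linear_combination (-mEval (h * m) g) * hcc' h hh + c' h * this

lemma LeftObservable.exists_inverse_extendible [IsAlgClosed k] (hobs : LeftObservable H M)
    (hM : IsAlgMonoid M) (hMirr : IrreducibleSet M) (hH : IsSubgroupOf H (unitGroup M))
    (hHcl : IsClosedIn H M) {ρ : MPoly k n} (hρ : IsCharacterOn H ρ)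
    (hext : Extendible M H ρ) :
    ∃ ρ', IsCharacterOn H ρ' ∧ (∀ h ∈ H, mEval h ρ * mEval h ρ' = 1) ∧ Extendible M H ρ' := by
  obtain ⟨ρ', hρ', hinv⟩ := hH.exists_inverse_character (hHcl.zclosed hM.zclosed) hρ
  obtain ⟨f, hf, hs⟩ := hext
  obtain ⟨g, hg, hgs⟩ :=
    hobs.exists_isSemiinvariant_inv hM hMirr hH.subset_of_unitGroup hinv hf hs
  exact ⟨ρ', hρ', hinv, g, hg, hgs⟩

/-- `w = det (q i (x * z' j))` with the column `j₀` replaced by `q` itself, so that `w` lies in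
the ideal generated by the `q i`.  Taking `z' j = u⁻¹ * z j` for a unit `u` with `q (u) ≠ 0`,
`w (u)` is a Cramer numerator of the invertible system `q (z j)`, nonzero for some `j₀`. -/
lemma IsTranslationMatrix.exists_isSemiinvariant_mem_ideal (hM : IsAlgMonoid M)
    (hMirr : IrreducibleSet M) {J : Ideal (MPoly k n)} {d : ℕ} (hd : 0 < d)
    {q : Fin d → MPoly k n} (hqJ : ∀ i, q i ∈ J) (hq : LinearIndependent k (evalOn M ∘ q))
    {A : Mat k n → Matrix (Fin d) (Fin d) k}
    (hA : IsTranslationMatrix M H q A) :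
    ∃ w ∈ J, ¬ VanishesOn M w ∧ IsSemiinvariant M H (fun h => (A h).det) w := by
  have hq₀ : ¬ VanishesOn M (q ⟨0, hd⟩) := fun h0 =>
    hq.ne_zero ⟨0, hd⟩ (by ext m; exact h0 m m.2)
  obtain ⟨u, huM, hu'M, hu⟩ := hM.exists_unit_eval_ne_zero hMirr hq₀
  obtain ⟨z, hz⟩ := exists_isUnit_det_of_linearIndependent _ hq
  let F : Matrix (Fin d) (Fin d) k := .of fun i j => mEval (z j : Mat k n) (q i)
  have hF : IsUnit F.det := hz
  let v : Fin d → k := fun i => mEval (u : Mat k n) (q i)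
  obtain ⟨j₀, hj₀⟩ : ∃ j₀, F.cramer v j₀ ≠ 0 := by
    by_contra! h0
    have := congrFun (F.mulVec_cramer v) ⟨0, hd⟩
    rw [show F.cramer v = 0 from funext h0, Matrix.mulVec_zero] at this
    simp [v, hF.ne_zero, hu] at this
  let z' : Fin d → Mat k n := Function.update (fun j => (u⁻¹ : (Mat k n)ˣ) * (z j : Mat k n)) j₀ 1
  let P : Matrix (Fin d) (Fin d) (MPoly k n) :=
    .of fun i j => if j = j₀ then q i else rightTranslate (z' j) (q i)
  refine ⟨P.det, ?_, fun h0 => hj₀ ?_, hA.isSemiinvariant_det hM P z' ?_ ?_⟩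
  · rw [Matrix.det_eq_sum_mul_adjugate_col _ j₀]
    exact Ideal.sum_mem _ fun i _ => J.mul_mem_right _ (by simpa [P] using hqJ i)
  · rw [Matrix.cramer_apply, ← h0 u huM, mEval_det]
    congr 1
    ext i j
    by_cases hj : j = j₀
    · simp [hj, repApply, P, v]
    · simp [hj, repApply, P, F, z', ← mul_assoc]
  · intro j
    by_cases hj : j = j₀
    · simpa [hj, z'] using hM.one_mem
    · simpa [hj, z'] using hM.mul_mem _ hu'M _ (z j).2
  · intro x i j
    by_cases hj : j = j₀
    · simp [hj, P, z']
    · simp [hj, P, z']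

lemma leftObservable_of_forall_inverse_extendible (hM : IsAlgMonoid M)
    (hMirr : IrreducibleSet M) (hH : IsSubgroupOf H (unitGroup M))
    (hinv : ∀ ρ : MPoly k n, IsCharacterOn H ρ → Extendible M H ρ →
      ∃ ρ' : MPoly k n, IsCharacterOn H ρ' ∧
        (∀ h ∈ H, mEval h ρ * mEval h ρ' = 1) ∧ Extendible M H ρ') :
    LeftObservable H M := by
  rintro J - hJ ⟨p₀, hp₀J, hp₀⟩
  have hHM := hH.subset_of_unitGroup
  have hgen : translateSpan M H p₀ ≤ (J.restrictScalars k).map (evalOn M) := by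
    refine Submodule.span_le.mpr ?_
    rintro _ ⟨h, hh, rfl⟩
    obtain ⟨p, hpJ, hp⟩ := hJ p₀ hp₀J h hh
    exact ⟨p, hpJ, by ext m; simpa using hp m m.2⟩
  obtain ⟨d, q, hqJ, hq, hspan⟩ := exists_linearIndependent_evalOn _ _ hgen
  obtain ⟨A, hA⟩ := (isLeftStable_translateSpan hM hH p₀).exists_isTranslationMatrix hspan
  have hd : 0 < d := by
    refine Nat.pos_of_ne_zero fun hd0 => hp₀ fun m hm => ?_
    subst hd0
    have h0 := evalOn_mem_translateSpan M hH.2.1 p₀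
    rw [← hspan, Set.range_eq_empty, Submodule.span_empty, Submodule.mem_bot] at h0
    simpa using congrFun h0 ⟨m, hm⟩
  obtain ⟨χ, hχ, hχext, hχA⟩ := hA.exists_character hM hHM hq
  obtain ⟨ρ', -, hχρ', F', hF', hF's⟩ := hinv χ hχ hχext
  obtain ⟨w, hwJ, hw, hws⟩ := hA.exists_isSemiinvariant_mem_ideal hM hMirr hd hqJ hq
  refine ⟨w * F', J.mul_mem_right F' hwJ, hMirr.not_vanishesOn_mul hw hF', fun h hh m hm => ?_⟩
  simp only [mEval_mul, hws h hh m hm, hF's h hh m hm, ← hχA h hh]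
  linear_combination (mEval m w * mEval m F') * hχρ' h hh

lemma LeftObservable.extendible [IsAlgClosed k] (hobs : LeftObservable H M)
    (hM : IsAlgMonoid M) (hMirr : IrreducibleSet M) (hH : IsSubgroupOf H (unitGroup M))
    (hHcl : IsClosedIn H M) {χ : MPoly k n} (hχ : IsCharacterOn H χ) : Extendible M H χ := by
  have hHM := hH.subset_of_unitGroup
  let V := translateSpan M H χ
  let W := V ⊓ LinearMap.ker (LinearMap.funLeft k k (Set.inclusion hHM))
  have hWV : W ≤ V := inf_le_left
  have hVrange : V ≤ (⊤ : Submodule k (MPoly k n)).map (evalOn M) := by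
    rw [Submodule.map_top]
    exact Submodule.span_le.mpr (by rintro _ ⟨h, -, rfl⟩; exact ⟨_, rfl⟩)
  have : FiniteDimensional k W := Submodule.finiteDimensional_of_le hWV
  obtain ⟨e, q, -, hq, hspan⟩ := exists_linearIndependent_evalOn W ⊤ (hWV.trans hVrange)
  obtain ⟨A, hA⟩ := ((isLeftStable_translateSpan hM hH χ).inf_ker_restrict hHM
    hH.2.2.1).exists_isTranslationMatrix hspan
  obtain ⟨χW, hχW, hχWext, hχWA⟩ := hA.exists_character hM hHM hq
  obtain ⟨ρ', -, hχWρ', hρ'ext⟩ := hobs.exists_inverse_extendible hM hMirr hH hHcl hχW hχWext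
  have hχV : evalOn M χ ∈ V := evalOn_mem_translateSpan M hH.2.1 χ
  have hrel : ∀ h ∈ H, evalOn M (leftTranslate h χ) - mEval h χ • evalOn M χ ∈
      Submodule.span k (Set.range (evalOn M ∘ q)) := by
    intro h hh
    rw [hspan]
    refine ⟨V.sub_mem (Submodule.subset_span ⟨h, hh, rfl⟩) (V.smul_mem _ hχV), ?_⟩
    ext x
    simp [hχ.map_mul h hh x x.2]
  obtain ⟨B, hB, hBdet⟩ := hA.cons hrel
  have hχq : LinearIndependent k (evalOn M ∘ Matrix.vecCons χ q) := by
    have hcomp : evalOn M ∘ Matrix.vecCons χ q = Fin.cons (evalOn M χ) (evalOn M ∘ q) := by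
      ext i
      refine Fin.cases ?_ (fun i => ?_) i <;> simp
    rw [hcomp, linearIndependent_finCons, hspan]
    refine ⟨hq, fun hmem => ?_⟩
    simpa [hχ.map_one] using congrFun (LinearMap.mem_ker.mp hmem.2) ⟨1, hH.2.1⟩
  obtain ⟨ψ, -, hψext, hψB⟩ := hB.exists_character hM hHM hχq
  refine (hψext.mul hMirr hρ'ext).congr fun h hh => ?_
  rw [mEval_mul, hψB h hh, hBdet h hh, ← hχWA h hh]
  linear_combination mEval h χ * hχWρ' h hh

end Observability

/-- Let `M` be an irreducible affine algebraic monoid with unit group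
`G` and let `H ⊆ G` be a subgroup, closed in `M`.  The following are equivalent:
(1) `H` is observable in `M`; (2) `E_M(H)` is a group, i.e. for every `ρ ∈ E_M(H)`
also `ρ⁻¹ ∈ E_M(H)`; (3) `E_M(H) = X(H)`, i.e. every rational character of `H` is
extendible to `M`. -/
theorem observable_in_monoid_iff_extendible_group_iff_all_characters_extend
    {k : Type} [Field k] [IsAlgClosed k] {n : ℕ}
    (M H : Set (Mat k n)) (hM : IsAlgMonoid M) (hMirr : IrreducibleSet M)
    (hH : IsSubgroupOf H (unitGroup M)) (hHcl : IsClosedIn H M) :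
    (LeftObservable H M ↔
      ∀ ρ : MPoly k n, IsCharacterOn H ρ → Extendible M H ρ →
        ∃ ρ' : MPoly k n, IsCharacterOn H ρ' ∧
          (∀ h ∈ H, mEval h ρ * mEval h ρ' = 1) ∧ Extendible M H ρ') ∧
    (LeftObservable H M ↔
      ∀ ρ : MPoly k n, IsCharacterOn H ρ → Extendible M H ρ) := by
  have h21 := leftObservable_of_forall_inverse_extendible hM hMirr hH
  refine ⟨⟨fun hobs _ hρ => hobs.exists_inverse_extendible hM hMirr hH hHcl hρ, h21⟩,
    ⟨fun hobs _ hρ => hobs.extendible hM hMirr hH hHcl hρ, fun hall => h21 fun ρ hρ _ => ?_⟩⟩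
  obtain ⟨ρ', hρ', hinv⟩ := hH.exists_inverse_character (hHcl.zclosed hM.zclosed) hρ
  exact ⟨ρ', hρ', hinv, hall ρ' hρ'⟩

end AlgebraicMonoid
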